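/- Let H be a solution of (f^i−f^j)∂_i∂_j H = ∂_j H ∂_i g^i − ∂_i H ∂_j g^j with ∂_i H ≠ 0 and f^i ≠ f^j pairwise, K another solution, and v^i = −∂_i K/∂_i H. Then v satisfies the semihamiltonian condition: for pairwise distinct i, j, k, ∂_k(∂_j v^i/(v^i − v^j)) = ∂_j(∂_k v^i/(v^i − v^k)) (wherever denominators do not vanish). -/

import Mathlib

noncomputable def pd {n : ℕ} (i : Fin n) (F : (Fin n → ℝ) → ℝ) (u : Fin n → ℝ) : ℝ :=
  fderiv ℝ F u (Pi.single i 1)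

lemma pd_smooth {n : ℕ} (i : Fin n) {F : (Fin n → ℝ) → ℝ} (hF : ContDiff ℝ (⊤ : ℕ∞) F) :
    ContDiff ℝ (⊤ : ℕ∞) (pd i F) :=
  (hF.fderiv_right (by simp)).clm_apply contDiff_const

lemma pd_diff {n : ℕ} (i : Fin n) {F : (Fin n → ℝ) → ℝ} (hF : ContDiff ℝ (⊤ : ℕ∞) F)
    (u : Fin n → ℝ) : DifferentiableAt ℝ (pd i F) u :=
  ((pd_smooth i hF).differentiable (by simp)).differentiableAt

lemma pd_congr {n : ℕ} (i : Fin n) {F G : (Fin n → ℝ) → ℝ} {u : Fin n → ℝ}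
    (h : F =ᶠ[nhds u] G) : pd i F u = pd i G u := by
  unfold pd; rw [h.fderiv_eq]

lemma pd_mul {n : ℕ} (i : Fin n) {F G : (Fin n → ℝ) → ℝ} {u : Fin n → ℝ}
    (hF : DifferentiableAt ℝ F u) (hG : DifferentiableAt ℝ G u) :
    pd i (fun w => F w * G w) u = pd i F u * G u + F u * pd i G u := by
  unfold pd; rw [fderiv_fun_mul hF hG]; simp; ring

lemma pd_inv {n : ℕ} (i : Fin n) {G : (Fin n → ℝ) → ℝ} {u : Fin n → ℝ}
    (hG : DifferentiableAt ℝ G u) (hne : G u ≠ 0) :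
    pd i (fun w => (G w)⁻¹) u = -pd i G u / G u ^ 2 := by
  unfold pd
  have h : fderiv ℝ (fun w => (G w)⁻¹) u
      = (fderiv ℝ (fun x : ℝ => x⁻¹) (G u)).comp (fderiv ℝ G u) :=
    fderiv_comp u (differentiableAt_inv hne) hG
  rw [h, fderiv_inv]
  simp
  ring

lemma pd_div {n : ℕ} (i : Fin n) {F G : (Fin n → ℝ) → ℝ} {u : Fin n → ℝ}
    (hF : DifferentiableAt ℝ F u) (hG : DifferentiableAt ℝ G u) (hne : G u ≠ 0) :
    pd i (fun w => F w / G w) u = (pd i F u * G u - F u * pd i G u) / G u ^ 2 := by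
  have h1 : (fun w => F w / G w) = fun w => F w * (G w)⁻¹ := by
    funext w; rw [div_eq_mul_inv]
  rw [h1, pd_mul (G := fun w => (G w)⁻¹) i hF (hG.inv hne), pd_inv i hG hne]
  field_simp
  ring

lemma pd_neg {n : ℕ} (i : Fin n) {F : (Fin n → ℝ) → ℝ} {u : Fin n → ℝ} :
    pd i (fun w => -F w) u = -pd i F u := by
  unfold pd; rw [fderiv_fun_neg]; simp

lemma pd_sub {n : ℕ} (i : Fin n) {F G : (Fin n → ℝ) → ℝ} {u : Fin n → ℝ}
    (hF : DifferentiableAt ℝ F u) (hG : DifferentiableAt ℝ G u) :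
    pd i (fun w => F w - G w) u = pd i F u - pd i G u := by
  unfold pd; rw [fderiv_fun_sub hF hG]; simp

lemma pd_single {n : ℕ} (k l : Fin n) {φ : ℝ → ℝ} (hφ : Differentiable ℝ φ) (u : Fin n → ℝ) :
    pd k (fun w => φ (w l)) u = (if k = l then 1 else 0) * deriv φ (u l) := by
  have h1 : HasFDerivAt (fun w : Fin n → ℝ => w l)
      ((ContinuousLinearMap.proj l : ((Fin n → ℝ) →L[ℝ] ℝ))) u := hasFDerivAt_apply l u
  have h2 := ((hφ (u l)).hasDerivAt).comp_hasFDerivAt u h1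
  unfold pd
  rw [show (fun w : Fin n → ℝ => φ (w l)) = (φ ∘ fun w => w l) from rfl, h2.fderiv]
  simp only [ContinuousLinearMap.smul_apply, ContinuousLinearMap.proj_apply,
    Pi.single_apply, smul_eq_mul]
  rcases eq_or_ne k l with h | h
  · subst h; simp
  · rw [if_neg h, if_neg (Ne.symm h)]; ring

lemma pd_single_ne {n : ℕ} (k l : Fin n) {φ : ℝ → ℝ} (hφ : Differentiable ℝ φ)
    (u : Fin n → ℝ) (h : k ≠ l) :
    pd k (fun w => φ (w l)) u = 0 := by
  rw [pd_single k l hφ u, if_neg h, zero_mul]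

lemma pd_single_eq {n : ℕ} (l : Fin n) {φ : ℝ → ℝ} (hφ : Differentiable ℝ φ)
    (u : Fin n → ℝ) :
    pd l (fun w => φ (w l)) u = deriv φ (u l) := by
  rw [pd_single l l hφ u, if_pos rfl, one_mul]

/-- For `H`, `K` solutions of the cohomological equation, the velocities
`v^i = −∂_i K/∂_i H` satisfy the semihamiltonian condition
`∂_k(∂_j v^i/(v^i − v^j)) = ∂_j(∂_k v^i/(v^i − v^k))` for pairwise distinct `i, j, k`. -/
theorem stmt3 {n : ℕ} (U : Set (Fin n → ℝ)) (hU : IsOpen U)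
    (f g : Fin n → ℝ → ℝ) (hf : ∀ i, ContDiff ℝ (⊤ : ℕ∞) (f i)) (hg : ∀ i, ContDiff ℝ (⊤ : ℕ∞) (g i))
    (hfd : ∀ i j : Fin n, i ≠ j → ∀ u ∈ U, f i (u i) ≠ f j (u j))
    (H K : (Fin n → ℝ) → ℝ) (hH : ContDiff ℝ (⊤ : ℕ∞) H) (hK : ContDiff ℝ (⊤ : ℕ∞) K)
    (hHne : ∀ u ∈ U, ∀ i, pd i H u ≠ 0)
    (hHeq : ∀ i j : Fin n, i ≠ j → ∀ u ∈ U,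
      (f i (u i) - f j (u j)) * pd i (pd j H) u
        = pd j H u * deriv (g i) (u i) - pd i H u * deriv (g j) (u j))
    (hKeq : ∀ i j : Fin n, i ≠ j → ∀ u ∈ U,
      (f i (u i) - f j (u j)) * pd i (pd j K) u
        = pd j K u * deriv (g i) (u i) - pd i K u * deriv (g j) (u j))
    (v : Fin n → (Fin n → ℝ) → ℝ)
    (hv : ∀ i u, v i u = -(pd i K u) / pd i H u) :
    ∀ i j k : Fin n, i ≠ j → j ≠ k → i ≠ k → ∀ u ∈ U,
      (∀ u' ∈ U, v i u' ≠ v j u' ∧ v i u' ≠ v k u') →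
      pd k (fun u' => pd j (v i) u' / (v i u' - v j u')) u
        = pd j (fun u' => pd k (v i) u' / (v i u' - v k u')) u := by
  intro i j k hij hjk hik u hu hne
  have hvfun : ∀ p, v p = fun w => -(pd p K w) / pd p H w := fun p => funext (hv p)
  -- second-derivative formulas
  have hHd : ∀ p q : Fin n, p ≠ q → ∀ u' ∈ U,
      pd p (pd q H) u' = (pd q H u' * deriv (g p) (u' p) - pd p H u' * deriv (g q) (u' q))
        / (f p (u' p) - f q (u' q)) := by
    intro p q hpq u' hu'
    rw [eq_div_iff (sub_ne_zero.2 (hfd p q hpq u' hu')), mul_comm]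
    exact hHeq p q hpq u' hu'
  have hKd : ∀ p q : Fin n, p ≠ q → ∀ u' ∈ U,
      pd p (pd q K) u' = (pd q K u' * deriv (g p) (u' p) - pd p K u' * deriv (g q) (u' q))
        / (f p (u' p) - f q (u' q)) := by
    intro p q hpq u' hu'
    rw [eq_div_iff (sub_ne_zero.2 (hfd p q hpq u' hu')), mul_comm]
    exact hKeq p q hpq u' hu'
  -- first derivative of v
  have lemB : ∀ p q : Fin n, p ≠ q → ∀ u' ∈ U,
      pd q (v p) u' = deriv (g p) (u' p)
          * (pd p K u' * pd q H u' - pd p H u' * pd q K u')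
          / ((f p (u' p) - f q (u' q)) * (pd p H u') ^ 2) := by
    intro p q hpq u' hu'
    rw [hvfun p]
    rw [pd_div q (F := fun w => -pd p K w) ((pd_diff p hK u').neg) (pd_diff p hH u') (hHne u' hu' p)]
    rw [pd_neg q]
    rw [hKd q p (Ne.symm hpq) u' hu', hHd q p (Ne.symm hpq) u' hu']
    have h1 : f q (u' q) - f p (u' p) ≠ 0 := sub_ne_zero.2 (hfd q p (Ne.symm hpq) u' hu')
    have h2 : f p (u' p) - f q (u' q) ≠ 0 := sub_ne_zero.2 (hfd p q hpq u' hu')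
    have h3 : pd p H u' ≠ 0 := hHne u' hu' p
    field_simp
    ring
  -- the quotient equals an explicit function on U
  have claimA : ∀ q : Fin n, i ≠ q → (∀ u' ∈ U, v i u' ≠ v q u') → ∀ u' ∈ U,
      pd q (v i) u' / (v i u' - v q u')
        = -(deriv (g i) (u' i)) * pd q H u' / ((f i (u' i) - f q (u' q)) * pd i H u') := by
    intro q hiq hvne u' hu'
    have hHi : pd i H u' ≠ 0 := hHne u' hu' i
    have hHq : pd q H u' ≠ 0 := hHne u' hu' q
    have hab : f i (u' i) - f q (u' q) ≠ 0 := sub_ne_zero.2 (hfd i q hiq u' hu')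
    have hvd : v i u' - v q u'
        = -(pd i K u' * pd q H u' - pd i H u' * pd q K u') / (pd i H u' * pd q H u') := by
      rw [hv, hv]; field_simp; ring
    have hDne : pd i K u' * pd q H u' - pd i H u' * pd q K u' ≠ 0 := by
      intro h0
      apply sub_ne_zero.2 (hvne u' hu')
      rw [hvd, h0, neg_zero, zero_div]
    rw [lemB i q hiq u' hu', hvd]
    have hW : -(pd i K u' * pd q H u' - pd i H u' * pd q K u')
        / (pd i H u' * pd q H u') ≠ 0 :=
      div_ne_zero (neg_ne_zero.2 hDne) (mul_ne_zero hHi hHq)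
    rw [div_eq_iff hW]
    field_simp
  -- replace both functions near u
  have hmem : U ∈ nhds u := hU.mem_nhds hu
  have hc1 : pd k (fun u' => pd j (v i) u' / (v i u' - v j u')) u
      = pd k (fun w => -(deriv (g i) (w i)) * pd j H w
          / ((f i (w i) - f j (w j)) * pd i H w)) u :=
    pd_congr k (Filter.eventuallyEq_of_mem hmem
      (fun u' hu' => claimA j hij (fun u'' hu'' => (hne u'' hu'').1) u' hu'))
  have hc2 : pd j (fun u' => pd k (v i) u' / (v i u' - v k u')) u
      = pd j (fun w => -(deriv (g i) (w i)) * pd k H w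
          / ((f i (w i) - f k (w k)) * pd i H w)) u :=
    pd_congr j (Filter.eventuallyEq_of_mem hmem
      (fun u' hu' => claimA k hik (fun u'' hu'' => (hne u'' hu'').2) u' hu'))
  rw [hc1, hc2]
  -- smoothness of pieces
  have hgi' : Differentiable ℝ (deriv (g i)) := by
    have h : ContDiff ℝ ((⊤ : ℕ∞) : WithTop ℕ∞) (g i) := (hg i).of_le (by simp)
    exact (contDiff_infty_iff_deriv.mp h).2.differentiable (by simp)
  have hproj : ∀ l : Fin n, Differentiable ℝ (fun w : Fin n → ℝ => w l) := fun l =>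
    (ContinuousLinearMap.proj l : ((Fin n → ℝ) →L[ℝ] ℝ)).differentiable
  have hGI : Differentiable ℝ (fun w : Fin n → ℝ => deriv (g i) (w i)) :=
    hgi'.comp (hproj i)
  have hFl : ∀ l : Fin n, Differentiable ℝ (fun w : Fin n → ℝ => f l (w l)) := fun l =>
    ((hf l).differentiable (by simp)).comp (hproj l)
  have hNGI : DifferentiableAt ℝ (fun w : Fin n → ℝ => -(deriv (g i) (w i))) u :=
    (hGI u).neg
  have hNj : DifferentiableAt ℝ (fun w : Fin n → ℝ => -(deriv (g i) (w i)) * pd j H w) u :=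
    hNGI.mul (pd_diff j hH u)
  have hNk : DifferentiableAt ℝ (fun w : Fin n → ℝ => -(deriv (g i) (w i)) * pd k H w) u :=
    hNGI.mul (pd_diff k hH u)
  have hfsub : ∀ l : Fin n, DifferentiableAt ℝ
      (fun w : Fin n → ℝ => f i (w i) - f l (w l)) u := fun l =>
    (hFl i u).sub (hFl l u)
  have hDj : DifferentiableAt ℝ (fun w : Fin n → ℝ => (f i (w i) - f j (w j)) * pd i H w) u :=
    (hfsub j).mul (pd_diff i hH u)
  have hDk : DifferentiableAt ℝ (fun w : Fin n → ℝ => (f i (w i) - f k (w k)) * pd i H w) u :=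
    (hfsub k).mul (pd_diff i hH u)
  have hHi : pd i H u ≠ 0 := hHne u hu i
  have hab : f i (u i) - f j (u j) ≠ 0 := sub_ne_zero.2 (hfd i j hij u hu)
  have hac : f i (u i) - f k (u k) ≠ 0 := sub_ne_zero.2 (hfd i k hik u hu)
  have hDjne : (f i (u i) - f j (u j)) * pd i H u ≠ 0 := mul_ne_zero hab hHi
  have hDkne : (f i (u i) - f k (u k)) * pd i H u ≠ 0 := mul_ne_zero hac hHi
  rw [pd_div k hNj hDj hDjne, pd_div j hNk hDk hDkne]
  rw [pd_mul k hNGI (pd_diff j hH u), pd_mul j hNGI (pd_diff k hH u)]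
  rw [pd_mul k (hfsub j) (pd_diff i hH u), pd_mul j (hfsub k) (pd_diff i hH u)]
  rw [pd_neg k, pd_neg j]
  rw [pd_single_ne k i hgi' u (Ne.symm hik), pd_single_ne j i hgi' u (Ne.symm hij)]
  rw [pd_sub k (hFl i u) (hFl j u)]
  rw [pd_sub j (hFl i u) (hFl k u)]
  rw [pd_single_ne k i ((hf i).differentiable (by simp)) u (Ne.symm hik),
    pd_single_ne k j ((hf j).differentiable (by simp)) u (Ne.symm hjk),
    pd_single_ne j i ((hf i).differentiable (by simp)) u (Ne.symm hij),
    pd_single_ne j k ((hf k).differentiable (by simp)) u hjk]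
  rw [hHd k j (Ne.symm hjk) u hu, hHd k i (Ne.symm hik) u hu,
    hHd j i (Ne.symm hij) u hu, hHd j k hjk u hu]
  have hkj : f k (u k) - f j (u j) ≠ 0 := sub_ne_zero.2 (hfd k j (Ne.symm hjk) u hu)
  have hki : f k (u k) - f i (u i) ≠ 0 := sub_ne_zero.2 (hfd k i (Ne.symm hik) u hu)
  have hji : f j (u j) - f i (u i) ≠ 0 := sub_ne_zero.2 (hfd j i (Ne.symm hij) u hu)
  have hjk' : f j (u j) - f k (u k) ≠ 0 := sub_ne_zero.2 (hfd j k hjk u hu)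
  field_simp
  ring
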